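/- arXiv:2512.13138 — 3 statements merged into one kernel-verified Lean document; each statement's English description precedes it below -/
import Mathlib

section
/- Hellmann–Feynman theorem (finite-dimensional): let n be a finite index type, A : ℝ → Matrix n n ℂ a family of Hermitian matrices, ψ : ℝ → EuclideanSpace ℂ n, and E : ℝ → ℝ. Assume: (i) for every t, A t is Hermitian, ‖ψ t‖ = 1, and (A t)·(ψ t) = (E t : ℂ) • ψ t (ψ t is a normalized eigenvector of A t with eigenvalue E t); (ii) at a point t₀, A has derivative A' (HasDerivAt A A' t₀, entrywise / in the matrix normed space), ψ has derivative ψ' (HasDerivAt ψ ψ' t₀), and E is differentiable at t₀. Then the derivative of E at t₀ equals Re⟪ψ t₀, A'·(ψ t₀)⟫. -/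
open Matrix in
/-- Hellmann–Feynman theorem (finite-dimensional): if `ψ t` is a normalized eigenvector of the
Hermitian family `A t` with eigenvalue `E t`, and `A`, `ψ`, `E` are differentiable at `t₀`,
then `E' (t₀) = Re⟪ψ t₀, A' (ψ t₀)⟫`. -/
theorem hellmann_feynman {n : Type*} [Fintype n] [DecidableEq n]
    (A : ℝ → Matrix n n ℂ) (A' : Matrix n n ℂ)
    (ψ : ℝ → EuclideanSpace ℂ n) (ψ' : EuclideanSpace ℂ n)
    (E : ℝ → ℝ) (t₀ : ℝ)
    (hherm : ∀ t, (A t).IsHermitian)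
    (hnorm : ∀ t, ‖ψ t‖ = 1)
    (heig : ∀ t, Matrix.toEuclideanLin (A t) (ψ t) = (E t : ℂ) • ψ t)
    (hA : ∀ i j, HasDerivAt (fun t => A t i j) (A' i j) t₀)
    (hψ : HasDerivAt ψ ψ' t₀)
    (hE : DifferentiableAt ℝ E t₀) :
    HasDerivAt E ((inner ℂ (ψ t₀) (Matrix.toEuclideanLin A' (ψ t₀)) : ℂ).re) t₀ := by
  -- coordinate derivatives of ψ
  have hψc : ∀ j, HasDerivAt (fun t => ψ t j) (ψ' j) t₀ := fun j => by
    have := (EuclideanSpace.proj (𝕜 := ℂ) j).hasFDerivAt.restrictScalars ℝ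
      |>.comp_hasDerivAt t₀ hψ
    exact this
  -- derivative of F t = (A t) *ᵥ ψ t in pi type
  set F : ℝ → n → ℂ := fun t => (A t) *ᵥ (ψ t) with hF
  set F' : n → ℂ := fun i => (A' *ᵥ (ψ t₀)) i + ((A t₀) *ᵥ ψ') i with hF'
  have hFd : HasDerivAt F F' t₀ := by
    rw [hasDerivAt_pi]
    intro i
    have : HasDerivAt (fun t => ∑ j, A t i j * ψ t j)
        (∑ j, (A' i j * ψ t₀ j + A t₀ i j * ψ' j)) t₀ :=
      HasDerivAt.fun_sum fun j _ => (hA i j).mul (hψc j)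
    simpa [hF, hF', mulVec, dotProduct, Finset.sum_add_distrib] using this
  -- transfer to EuclideanSpace
  set e := (EuclideanSpace.equiv n ℂ).symm
  set φ : ℝ → EuclideanSpace ℂ n := fun t => Matrix.toEuclideanLin (A t) (ψ t) with hφ
  set φ' : EuclideanSpace ℂ n := Matrix.toEuclideanLin A' (ψ t₀) + Matrix.toEuclideanLin (A t₀) ψ' with hφ'
  have hφd : HasDerivAt φ φ' t₀ := by
    have h := (e.toContinuousLinearMap.hasFDerivAt.restrictScalars ℝ).comp_hasDerivAt t₀ hFd
    have h1 : (e ∘ F) = φ := by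
      funext t
      simp [hφ, toEuclideanLin_apply, hF, e]
    have h2 : e F' = φ' := by
      simp [hφ', toEuclideanLin_apply]
      rfl
    rw [← h1, ← h2]
    simpa using h
  -- derivative of inner product
  have hg : HasDerivAt (fun t => (inner ℂ (ψ t) (φ t) : ℂ).re)
      ((inner ℂ (ψ t₀) φ' + inner ℂ ψ' (φ t₀) : ℂ).re) t₀ := by
    have := (hψ.inner ℂ hφd)
    exact (Complex.reCLM.hasFDerivAt.comp_hasDerivAt t₀ this)
  -- inner(ψ t, φ t).re = E t
  have hgE : (fun t => (inner ℂ (ψ t) (φ t) : ℂ).re) = E := by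
    funext t
    rw [hφ]
    simp only [heig t, inner_smul_right, inner_self_eq_norm_sq_to_K, hnorm t]
    norm_num
  rw [hgE] at hg
  -- now simplify the derivative value
  -- Re⟪ψ,ψ'⟫ + Re⟪ψ',ψ⟫ = 0
  have hconst : HasDerivAt (fun t => (inner ℂ (ψ t) (ψ t) : ℂ).re)
      ((inner ℂ (ψ t₀) ψ' + inner ℂ ψ' (ψ t₀) : ℂ).re) t₀ :=
    Complex.reCLM.hasFDerivAt.comp_hasDerivAt t₀ (hψ.inner ℂ hψ)
  have hone : (fun t => (inner ℂ (ψ t) (ψ t) : ℂ).re) = fun _ => (1:ℝ) := by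
    funext t
    simp [inner_self_eq_norm_sq_to_K, hnorm t]
  rw [hone] at hconst
  have hzero : (inner ℂ (ψ t₀) ψ' + inner ℂ ψ' (ψ t₀) : ℂ).re = 0 :=
    hconst.unique (hasDerivAt_const t₀ 1)
  -- compute the derivative
  have hsym := (Matrix.isHermitian_iff_isSymmetric.mp (hherm t₀))
  have key : (inner ℂ (ψ t₀) φ' + inner ℂ ψ' (φ t₀) : ℂ).re
      = (inner ℂ (ψ t₀) (Matrix.toEuclideanLin A' (ψ t₀)) : ℂ).re := by
    have e1 : (inner ℂ (ψ t₀) (Matrix.toEuclideanLin (A t₀) ψ') : ℂ)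
        = (E t₀ : ℂ) * inner ℂ (ψ t₀) ψ' := by
      rw [← hsym (ψ t₀) ψ', heig t₀, inner_smul_left]
      simp
    have e2 : (inner ℂ ψ' (φ t₀) : ℂ) = (E t₀ : ℂ) * inner ℂ ψ' (ψ t₀) := by
      show (inner ℂ ψ' (Matrix.toEuclideanLin (A t₀) (ψ t₀)) : ℂ) = _
      rw [heig t₀, inner_smul_right]
    rw [hφ', inner_add_right, e1, e2]
    have him : (inner ℂ (ψ t₀) ψ' + inner ℂ ψ' (ψ t₀) : ℂ).im = 0 := by
      rw [← inner_conj_symm (ψ t₀) ψ']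
      simp only [Complex.add_im, Complex.conj_im]
      ring
    have hz : ((E t₀ : ℂ) * inner ℂ (ψ t₀) ψ' + (E t₀ : ℂ) * inner ℂ ψ' (ψ t₀)).re = 0 := by
      rw [← mul_add, Complex.mul_re, hzero, him]
      simp
    rw [add_assoc, Complex.add_re, hz, add_zero]
  rw [key] at hg
  exact hg
end

section
/- Continuity of the gradient of a convex function (core of the paper's Appendix A Lemma): let E be a finite-dimensional real inner product space, s ⊆ E an open convex set, f : E → ℝ convex on s (ConvexOn ℝ s f), and g : E → E a map with HasGradientAt f (g x) x for every x ∈ s. Then g is continuous on s (ContinuousOn g s). In particular, the map sending the density ρ to its external potential v(ρ) = ∇F(ρ), for a convex differentiable functional F, is continuous. -/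
set_option maxHeartbeats 1000000

open Metric Set

/-- Subgradient inequality for a convex function at a point of differentiability. -/
lemma inner_grad_le_sub {E : Type*}
    [NormedAddCommGroup E] [InnerProductSpace ℝ E] [CompleteSpace E]
    {s : Set E} (hs : Convex ℝ s) {f : E → ℝ} (hf : ConvexOn ℝ s f)
    {x y G : E} (hx : x ∈ s) (hy : y ∈ s) (hgx : HasGradientAt f G x) :
    inner ℝ G (y - x) ≤ f y - f x := by
  set L : ℝ → E := fun u => x + u • (y - x) with hL
  have hφconv : ConvexOn ℝ (Icc (0:ℝ) 1) (f ∘ L) := by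
    refine ⟨convex_Icc 0 1, fun a ha b hb μ ν hμ hν hμν => ?_⟩
    have hLmem : ∀ u ∈ Icc (0:ℝ) 1, L u ∈ s := fun u hu =>
      hs.add_smul_sub_mem hx hy hu
    have hcomb : L (μ * a + ν * b) = μ • L a + ν • L b := by
      have hμ' : μ = 1 - ν := by linarith
      subst hμ'
      simp only [hL]
      module
    simp only [Function.comp_apply, smul_eq_mul, hcomb]
    exact hf.2 (hLmem a ha) (hLmem b hb) hμ hν hμν
  have hLd : HasDerivAt L (y - x) 0 := by
    have : HasDerivAt (fun u : ℝ => u • (y - x)) ((1:ℝ) • (y - x)) 0 :=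
      (hasDerivAt_id (0:ℝ)).smul_const (y - x)
    simpa [hL] using this.const_add x
  have hL0 : L 0 = x := by simp [hL]
  have hfd : HasFDerivAt f (InnerProductSpace.toDual ℝ E G) x := hgx.hasFDerivAt
  rw [← hL0] at hfd
  have hd : HasDerivAt (f ∘ L) (inner ℝ G (y - x)) 0 := by
    simpa [InnerProductSpace.toDual_apply_apply] using hfd.comp_hasDerivAt 0 hLd
  have hslope := hφconv.le_slope_of_hasDerivAt (by norm_num) (by norm_num)
    (by norm_num : (0:ℝ) < 1) hd
  have : slope (f ∘ L) 0 1 = f y - f x := by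
    simp [slope_def_field, hL]
  linarith [hslope.trans_eq this]

/-- Continuity of the gradient of a convex function: if `f` is convex on an open convex set `s`
of a finite-dimensional real inner product space and `g x` is its gradient at every `x ∈ s`,
then `g` is continuous on `s`. -/
theorem gradient_continuousOn_of_convexOn {E : Type*}
    [NormedAddCommGroup E] [InnerProductSpace ℝ E] [FiniteDimensional ℝ E]
    (s : Set E) (hso : IsOpen s) (hs : Convex ℝ s)
    (f : E → ℝ) (hf : ConvexOn ℝ s f)
    (g : E → E) (hg : ∀ x ∈ s, HasGradientAt f (g x) x) :
    ContinuousOn g s := by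
  intro x₀ hx₀
  refine (ContinuousAt.continuousWithinAt ?_)
  -- local Lipschitz bound for f near x₀
  obtain ⟨K, t, ht, hK⟩ := (hf.locallyLipschitzOn hso) hx₀
  rw [hso.nhdsWithin_eq hx₀] at ht
  obtain ⟨r₀, hr₀pos, hball⟩ := Metric.mem_nhds_iff.1 (Filter.inter_mem ht (hso.mem_nhds hx₀))
  have hballs : ball x₀ r₀ ⊆ s := fun z hz => (hball hz).2
  have hballt : ball x₀ r₀ ⊆ t := fun z hz => (hball hz).1
  rw [Metric.continuousAt_iff]
  intro ε hε
  -- differentiability at x₀ : little-o bound with constant ε/4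
  have hlo := (hg x₀ hx₀).hasFDerivAt.isLittleO
  have hev := hlo.def (show (0:ℝ) < ε/4 by linarith)
  rw [Metric.eventually_nhds_iff] at hev
  obtain ⟨δ, hδpos, hδ⟩ := hev
  -- choose the step size t₀
  set t₀ : ℝ := min (r₀/4) (δ/2) with ht₀
  have ht₀pos : 0 < t₀ := lt_min (by linarith) (by linarith)
  have ht₀r : t₀ < r₀/2 := lt_of_le_of_lt (min_le_left _ _) (by linarith)
  have ht₀δ : t₀ < δ := lt_of_le_of_lt (min_le_right _ _) (by linarith)
  clear_value t₀
  -- choose the closeness η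
  refine ⟨min t₀ (ε * t₀ / (8 * (K + 1))), lt_min ht₀pos (by positivity), fun {x} hxd => ?_⟩
  have hxx₀ : dist x x₀ < t₀ := lt_of_lt_of_le hxd (min_le_left _ _)
  have hxx₀' : dist x x₀ < ε * t₀ / (8 * (K + 1)) := lt_of_lt_of_le hxd (min_le_right _ _)
  have hxball : x ∈ ball x₀ r₀ := by
    rw [mem_ball]; exact lt_trans hxx₀ (by linarith)
  have hxs : x ∈ s := hballs hxball
  rw [dist_eq_norm]
  set w : E := g x - g x₀ with hw
  clear_value w
  rcases eq_or_ne w 0 with h0 | h0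
  · rw [h0, norm_zero]; exact hε
  set v : E := ‖w‖⁻¹ • w with hv
  have hvnorm : ‖v‖ = 1 := by
    rw [hv, norm_smul, norm_inv, norm_norm, inv_mul_cancel₀ (norm_ne_zero_iff.2 h0)]
  set y : E := x + t₀ • v with hy
  have hyx : y - x = t₀ • v := by simp [hy]
  have hynorm : ‖y - x‖ = t₀ := by
    rw [hyx, norm_smul, Real.norm_eq_abs, abs_of_pos ht₀pos, hvnorm, mul_one]
  have hyball : y ∈ ball x₀ r₀ := by
    rw [mem_ball, dist_eq_norm]
    calc ‖y - x₀‖ ≤ ‖y - x‖ + ‖x - x₀‖ := norm_sub_le_norm_sub_add_norm_sub _ _ _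
    _ < t₀ + t₀ := by rw [hynorm]; have := hxx₀; rw [dist_eq_norm] at this; linarith
    _ < r₀ := by linarith
  have hys : y ∈ s := hballs hyball
  set z : E := x₀ + t₀ • v with hz
  have hzx₀ : z - x₀ = t₀ • v := by simp [hz]
  have hznorm : ‖z - x₀‖ = t₀ := by
    rw [hzx₀, norm_smul, Real.norm_eq_abs, abs_of_pos ht₀pos, hvnorm, mul_one]
  have hyzd : y - z = x - x₀ := by simp [hy, hz]
  clear_value y z
  have hzball : z ∈ ball x₀ r₀ := by
    rw [mem_ball, dist_eq_norm, hznorm]; linarith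
  -- subgradient inequality at x in direction v
  have h1 : inner ℝ (g x) (y - x) ≤ f y - f x :=
    inner_grad_le_sub hs hf hxs hys (hg x hxs)
  -- little-o bound at x₀ applied to z
  have h2' : |f z - f x₀ - t₀ * (inner ℝ (g x₀) v : ℝ)| ≤ ε/4 * t₀ := by
    have := hδ (show dist z x₀ < δ by rw [dist_eq_norm, hznorm]; exact ht₀δ)
    rw [InnerProductSpace.toDual_apply_apply, hznorm, hzx₀, real_inner_smul_right,
      Real.norm_eq_abs] at this
    exact this
  -- Lipschitz bounds
  have hyz : ‖y - z‖ = ‖x - x₀‖ := by rw [hyzd]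
  have hfK := hK.norm_sub_le
  have h3 : ‖f y - f z‖ ≤ K * ‖x - x₀‖ := by
    have h := hfK (hballt hyball) (hballt hzball)
    rwa [hyz] at h
  have h4 : ‖f x - f x₀‖ ≤ K * ‖x - x₀‖ := by
    simpa [dist_eq_norm] using hfK (hballt hxball) (hballt (mem_ball_self hr₀pos))
  -- put it together
  have hinner : inner ℝ (g x) (t₀ • v) = t₀ * inner ℝ (g x) v := real_inner_smul_right _ _ _
  have hinner₀ : inner ℝ (g x₀) (t₀ • v) = t₀ * (inner ℝ (g x₀) v : ℝ) := real_inner_smul_right _ _ _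
  have hwv : (inner ℝ w v : ℝ) = ‖w‖ := by
    rw [hv, real_inner_smul_right, real_inner_self_eq_norm_sq]
    field_simp [norm_ne_zero_iff.2 h0]
  clear_value v
  have habs2 : f z - f x₀ - t₀ * (inner ℝ (g x₀) v : ℝ) ≤ ε/4 * t₀ :=
    (le_abs_self _).trans h2'
  have hxn : ‖x - x₀‖ < ε * t₀ / (8 * (K + 1)) := by
    rwa [dist_eq_norm] at hxx₀'
  have hKnn : (0:ℝ) ≤ K := K.coe_nonneg
  have key : t₀ * (inner ℝ (g x) v : ℝ) ≤ t₀ * inner ℝ (g x₀) v + ε/4 * t₀ + 2 * K * ‖x - x₀‖ := by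
    have e1 : t₀ * (inner ℝ (g x) v : ℝ) ≤ f y - f x := by rw [← hinner, ← hyx]; exact h1
    have e2 : f y - f x ≤ f z - f x₀ + ‖f y - f z‖ + ‖f x - f x₀‖ := by
      have a1 : f y - f z ≤ ‖f y - f z‖ := le_abs_self _
      have a2 : f x₀ - f x ≤ ‖f x - f x₀‖ := by
        rw [Real.norm_eq_abs, abs_sub_comm]; exact le_abs_self _
      linarith
    have e3 : f z - f x₀ ≤ t₀ * inner ℝ (g x₀) v + ε/4 * t₀ := by linarith [habs2]
    linarith [h3, h4]
  have hwnorm : t₀ * ‖w‖ ≤ ε/4 * t₀ + 2 * K * ‖x - x₀‖ := by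
    have hsplit : (inner ℝ w v : ℝ) = inner ℝ (g x) v - inner ℝ (g x₀) v := by
      rw [hw, inner_sub_left]
    have h5 : t₀ * (inner ℝ w v : ℝ) ≤ ε/4 * t₀ + 2 * K * ‖x - x₀‖ := by
      rw [hsplit]; nlinarith [key]
    rwa [hwv] at h5
  have hlast : 2 * K * ‖x - x₀‖ < ε/4 * t₀ := by
    have hKpos : (0:ℝ) < (K:ℝ) + 1 := by positivity
    have h6 : 2 * ((K:ℝ) + 1) * (ε * t₀ / (8 * ((K:ℝ) + 1))) = ε / 4 * t₀ := by
      field_simp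
      ring
    nlinarith [norm_nonneg (x - x₀), hxn, mul_lt_mul_of_pos_left hxn
      (show (0:ℝ) < 2 * ((K:ℝ) + 1) by positivity)]
  have hfin : t₀ * ‖w‖ < t₀ * ε := by nlinarith [ht₀pos]
  exact lt_of_mul_lt_mul_left (by linarith [hfin]) (le_of_lt ht₀pos)
end

section
/- A convex function affine along a segment has constant gradient on the open segment: let E be a real inner product space, s ⊆ E an open convex set, and f : E → ℝ convex on s (ConvexOn ℝ s f). Let a, b ∈ s and suppose f is affine along the segment: f (a + t • (b − a)) = f a + t * (f b − f a) for all t ∈ [0,1]. Let t₀, t₁ ∈ (0,1), set x₀ = a + t₀ • (b − a) and x₁ = a + t₁ • (b − a), and suppose HasGradientAt f g₀ x₀ and HasGradientAt f g₁ x₁. Then g₀ = g₁. -/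
open Set

local notation "⟪" x ", " y "⟫" => @inner ℝ _ _ x y

/-- Subgradient inequality: a convex function admitting a gradient at an interior point lies
above its tangent plane. -/
lemma subgrad_ineq {E : Type*}
    [NormedAddCommGroup E] [InnerProductSpace ℝ E] [CompleteSpace E]
    {s : Set E} (f : E → ℝ) (hf : ConvexOn ℝ s f)
    {x : E} (hx : x ∈ s) {g : E} (hg : HasGradientAt f g x)
    {y : E} (hy : y ∈ s) : f x + ⟪g, y - x⟫ ≤ f y := by
  set γ : ℝ →ᵃ[ℝ] E := AffineMap.lineMap x y with hγ
  have hγ0 : γ 0 = x := AffineMap.lineMap_apply_zero x y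
  have hγ1 : γ 1 = y := AffineMap.lineMap_apply_one x y
  have hconv : ConvexOn ℝ (γ ⁻¹' s) (f ∘ γ) := hf.comp_affineMap γ
  have h0 : (0 : ℝ) ∈ γ ⁻¹' s := by simp [hγ0, hx]
  have h1 : (1 : ℝ) ∈ γ ⁻¹' s := by simp [hγ1, hy]
  -- derivative of f ∘ γ at 0
  have hc : HasDerivAt (fun t : ℝ => γ t) (y - x) 0 := by
    have h1 : HasDerivAt (fun t : ℝ => x + t • (y - x)) ((1 : ℝ) • (y - x)) 0 :=
      ((hasDerivAt_id (0 : ℝ)).smul_const (y - x)).const_add x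
    have heq : (fun t : ℝ => γ t) = fun t : ℝ => x + t • (y - x) := by
      funext t
      rw [hγ, AffineMap.lineMap_apply_module, smul_sub, sub_smul, one_smul]
      abel
    rw [heq]; simpa using h1
  have hgx : HasFDerivAt f (InnerProductSpace.toDual ℝ E g) (γ 0) :=
    hγ0 ▸ hg.hasFDerivAt
  have hderiv : HasDerivAt (f ∘ γ) ⟪g, y - x⟫ 0 := by
    have := hgx.comp_hasDerivAt (0 : ℝ) hc
    simpa using this
  have hslope := hconv.le_slope_of_hasDerivAt h0 h1 one_pos hderiv
  rw [slope_def_field] at hslope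
  simp only [Function.comp, hγ0, hγ1] at hslope
  have : ⟪g, y - x⟫ ≤ f y - f x := by
    simpa [div_one] using hslope
  linarith

/-- A convex function affine along a segment has constant gradient on the open segment:
if `f` is convex on the open convex set `s`, affine along the segment from `a` to `b` in `s`,
and has gradients `g₀`, `g₁` at interior points of the segment, then `g₀ = g₁`. -/
theorem gradient_const_on_affine_segment {E : Type*}
    [NormedAddCommGroup E] [InnerProductSpace ℝ E] [CompleteSpace E]
    (s : Set E) (hso : IsOpen s) (hs : Convex ℝ s)
    (f : E → ℝ) (hf : ConvexOn ℝ s f)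
    (a b : E) (ha : a ∈ s) (hb : b ∈ s)
    (haff : ∀ t ∈ Set.Icc (0 : ℝ) 1, f (a + t • (b - a)) = f a + t * (f b - f a))
    (t₀ t₁ : ℝ) (ht₀ : t₀ ∈ Set.Ioo (0 : ℝ) 1) (ht₁ : t₁ ∈ Set.Ioo (0 : ℝ) 1)
    (g₀ g₁ : E)
    (hg₀ : HasGradientAt f g₀ (a + t₀ • (b - a)))
    (hg₁ : HasGradientAt f g₁ (a + t₁ • (b - a))) :
    g₀ = g₁ := by
  set x₀ := a + t₀ • (b - a) with hx₀def
  set x₁ := a + t₁ • (b - a) with hx₁def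
  have hmem : ∀ t ∈ Set.Icc (0:ℝ) 1, a + t • (b - a) ∈ s := by
    intro t ht
    have h := hs ha hb (show (0:ℝ) ≤ 1 - t by linarith [ht.2]) (show (0:ℝ) ≤ t from ht.1)
      (by ring)
    have heq : (1 - t) • a + t • b = a + t • (b - a) := by
      rw [smul_sub, sub_smul, one_smul]; abel
    rwa [heq] at h
  have hx₀s : x₀ ∈ s := hmem t₀ ⟨ht₀.1.le, ht₀.2.le⟩
  have hx₁s : x₁ ∈ s := hmem t₁ ⟨ht₁.1.le, ht₁.2.le⟩
  -- Step 1: ⟪g₀, b - a⟫ = f b - f a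
  have hkey : ⟪g₀, b - a⟫ = f b - f a := by
    have hc : HasDerivAt (fun t : ℝ => a + t • (b - a)) (b - a) t₀ := by
      simpa using ((hasDerivAt_id t₀).smul_const (b - a)).const_add a
    have hψ : HasDerivAt (fun t : ℝ => f (a + t • (b - a))) ⟪g₀, b - a⟫ t₀ := by
      have := hg₀.hasFDerivAt.comp_hasDerivAt t₀ hc
      simpa [Function.comp_def] using this
    have hψ' : HasDerivAt (fun t : ℝ => f a + t * (f b - f a)) (f b - f a) t₀ := by
      simpa using ((hasDerivAt_id t₀).mul_const (f b - f a)).const_add (f a)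
    have heq : HasDerivAt (fun t : ℝ => f (a + t • (b - a))) (f b - f a) t₀ := by
      apply hψ'.congr_of_eventuallyEq
      filter_upwards [Ioo_mem_nhds ht₀.1 ht₀.2] with t ht
      exact (haff t ⟨ht.1.le, ht.2.le⟩)
    exact hψ.unique heq
  -- Step 2: g₀ is a subgradient at x₁
  have hsub : ∀ y ∈ s, f x₁ + ⟪g₀, y - x₁⟫ ≤ f y := by
    intro y hy
    have h0 := subgrad_ineq f hf hx₀s hg₀ hy
    have hdiff : x₁ - x₀ = (t₁ - t₀) • (b - a) := by
      rw [hx₀def, hx₁def]; rw [sub_smul]; abel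
    have hinner : ⟪g₀, y - x₀⟫ = ⟪g₀, y - x₁⟫ + (t₁ - t₀) * (f b - f a) := by
      have : y - x₀ = (y - x₁) + (x₁ - x₀) := by abel
      rw [this, inner_add_right, hdiff, real_inner_smul_right, hkey]
    have hval : f x₁ = f x₀ + (t₁ - t₀) * (f b - f a) := by
      rw [hx₀def, hx₁def, haff t₀ ⟨ht₀.1.le, ht₀.2.le⟩, haff t₁ ⟨ht₁.1.le, ht₁.2.le⟩]
      ring
    rw [hinner] at h0
    linarith
  -- Step 3: local min argument for each direction v
  apply ext_inner_right ℝ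
  intro v
  have hc : HasDerivAt (fun t : ℝ => x₁ + t • v) v 0 := by
    simpa using ((hasDerivAt_id (0:ℝ)).smul_const v).const_add x₁
  have hφ : HasDerivAt (fun t : ℝ => f (x₁ + t • v) - t * ⟪g₀, v⟫) (⟪g₁, v⟫ - ⟪g₀, v⟫) 0 := by
    have h1 : HasDerivAt (fun t : ℝ => f (x₁ + t • v)) ⟪g₁, v⟫ 0 := by
      have hgx1 : HasFDerivAt f (InnerProductSpace.toDual ℝ E g₁) (x₁ + (0:ℝ) • v) := by
        simpa using hg₁.hasFDerivAt
      have := hgx1.comp_hasDerivAt 0 hc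
      simpa [Function.comp_def] using this
    simpa [Pi.sub_def] using h1.sub (((hasDerivAt_id (0:ℝ)).mul_const ⟪g₀, v⟫))
  have hmin : IsLocalMin (fun t : ℝ => f (x₁ + t • v) - t * ⟪g₀, v⟫) 0 := by
    have hcont : Continuous (fun t : ℝ => x₁ + t • v) := by continuity
    have hnhds : (fun t : ℝ => x₁ + t • v) ⁻¹' s ∈ nhds (0:ℝ) := by
      apply hcont.continuousAt.preimage_mem_nhds
      simpa using hso.mem_nhds hx₁s
    filter_upwards [hnhds] with t ht
    have := hsub _ ht
    have hi : ⟪g₀, (x₁ + t • v) - x₁⟫ = t * ⟪g₀, v⟫ := by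
      simp [real_inner_smul_right]
    rw [hi] at this
    simpa using by linarith
  have := hmin.hasDerivAt_eq_zero hφ
  linarith [this]
end
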